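/- Let p and q be coprime natural numbers with p, q ≥ 2. Then there exist natural numbers k, l ≥ 1 such that l·q − k·p = 1, 2·l > p, and 2·k > q. -/

import Mathlib

/-!
A Bézout relation `u * p + v * q = 1` gives the solutions
`(v + t * p) * q - (t * q - u) * p = 1` for every `t`, and large `t` makes both coefficients large.
-/

theorem IsCoprime.exists_gt_mul_sub_mul_eq_one {a b : ℤ} (h : IsCoprime a b) (ha : 0 < a)
    (hb : 0 < b) (B : ℤ) : ∃ x y : ℤ, B < x ∧ B < y ∧ x * b - y * a = 1 := by
  obtain ⟨u, v, huv⟩ := h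
  set t := |u| + |v| + |B| + 1
  have ht : 0 ≤ t := by positivity
  have hta : t ≤ t * a := le_mul_of_one_le_right ht ha
  have htb : t ≤ t * b := le_mul_of_one_le_right ht hb
  refine ⟨v + t * a, t * b - u, ?_, ?_, by linear_combination huv⟩
  · linarith [neg_abs_le v, le_abs_self B, abs_nonneg u]
  · linarith [le_abs_self u, le_abs_self B, abs_nonneg v]

/-- for coprime p, q ≥ 2 there exist k, l ≥ 1 with l·q − k·p = 1,
2l > p and 2k > q. -/
theorem exists_bezout_with_bounds (p q : ℕ) (hp : 2 ≤ p) (hq : 2 ≤ q)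
    (hpq : Nat.Coprime p q) :
    ∃ k l : ℕ, 1 ≤ k ∧ 1 ≤ l ∧ (l * q : ℤ) - (k * p : ℤ) = 1 ∧
      p < 2 * l ∧ q < 2 * k := by
  obtain ⟨l, k, hl, hk, hlk⟩ := (Nat.isCoprime_iff_coprime.2 hpq).exists_gt_mul_sub_mul_eq_one
    (by omega) (by omega) (p + q)
  lift l to ℕ using by omega
  lift k to ℕ using by omega
  exact ⟨k, l, by omega, by omega, hlk, by omega, by omega⟩
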